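/- arXiv:1302.1306 — 4 statements merged into one kernel-verified Lean document; each statement's English description precedes it below -/
import Mathlib

section
/- Consider n sporadic tasks τ_1,…,τ_n with computation times C_j > 0, periods T_j > 0, and constrained deadlines D_j ≤ T_j, ordered by decreasing priority and scheduled by preemptive fixed-priority on one processor with zero jitter, all released simultaneously at time 0. Task τ_i meets its deadline in the synchronous critical instant if and only if there exists a vector n = (n_1,…,n_{i−1}) of positive integers such that C_i + Σ_{j=1}^{i−1} n_j·C_j ≤ n_k·T_k for all k = 1,…,i−1, and C_i + Σ_{j=1}^{i−1} n_j·C_j ≤ D_i. -/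
/-- Seto et al.'s exact schedulability test (Theorem 1): under preemptive
fixed-priority scheduling with synchronous release and zero jitter, task τ_i
(demand `C_i + Σ_j ⌈t/T_j⌉·C_j`) meets its deadline iff there is a vector of
positive integers `n` satisfying the stated linear inequalities. -/
theorem stmt0 (i : ℕ) (C T D : Fin i → ℝ) (Ci Di : ℝ)
    (hC : ∀ j, 0 < C j) (hT : ∀ j, 0 < T j) (hD : ∀ j, D j ≤ T j)
    (hCi : 0 < Ci) (hDi : 0 < Di) :
    (∃ t : ℝ, 0 < t ∧ t ≤ Di ∧ Ci + ∑ j, (⌈t / T j⌉ : ℝ) * C j ≤ t) ↔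
    (∃ n : Fin i → ℤ, (∀ j, 0 < n j) ∧
      (∀ k, Ci + ∑ j, (n j : ℝ) * C j ≤ (n k : ℝ) * T k) ∧
      Ci + ∑ j, (n j : ℝ) * C j ≤ Di) := by
  constructor
  · rintro ⟨t, ht0, htD, hW⟩
    refine ⟨fun j => ⌈t / T j⌉, ?_, ?_, le_trans hW htD⟩
    · intro j
      exact Int.ceil_pos.mpr (div_pos ht0 (hT j))
    · intro k
      refine le_trans hW ?_
      calc t = (t / T k) * T k := (div_mul_cancel₀ t (hT k).ne').symm
        _ ≤ (⌈t / T k⌉ : ℝ) * T k := by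
            exact mul_le_mul_of_nonneg_right (Int.le_ceil _) (le_of_lt (hT k))
  · rintro ⟨n, hn, hnk, hnD⟩
    set S := Ci + ∑ j, (n j : ℝ) * C j with hS
    have hSpos : 0 < S := by
      have : (0:ℝ) ≤ ∑ j, (n j : ℝ) * C j := by
        apply Finset.sum_nonneg
        intro j _
        exact mul_nonneg (by exact_mod_cast (hn j).le) (hC j).le
      linarith
    refine ⟨S, hSpos, hnD, ?_⟩
    have key : ∀ j, (⌈S / T j⌉ : ℝ) ≤ (n j : ℝ) := by
      intro j
      have : S / T j ≤ (n j : ℝ) := (div_le_iff₀ (hT j)).mpr (hnk j)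
      exact_mod_cast Int.ceil_le.mpr (by exact_mod_cast this)
    have : ∑ j, (⌈S / T j⌉ : ℝ) * C j ≤ ∑ j, (n j : ℝ) * C j := by
      apply Finset.sum_le_sum
      intro j _
      exact mul_le_mul_of_nonneg_right (key j) (hC j).le
    linarith
end

section
/- With the demand function W_i(t) = C_i + Σ_{j=1}^{i−1} ⌈t/T_j⌉·C_j for positive reals C_j, T_j, the condition 'there exists t ∈ (0, D_i] with W_i(t) ≤ t' is equivalent to 'there exists t of the form t = n_k·T_k for some k < i and positive integer n_k, or t = D_i, with 0 < t ≤ D_i and W_i(t) ≤ t'. That is, it suffices to check schedulability at multiples of higher-priority periods and at the deadline. -/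
/-- Scheduling-point reduction: the workload condition `W_i(t) ≤ t` for some
`t ∈ (0, D_i]` holds iff it holds at some point of the form `n_k·T_k`
(positive multiple of a higher-priority period) or at `t = D_i`. -/
theorem stmt1 (i : ℕ) (C T : Fin i → ℝ) (Ci Di : ℝ)
    (hC : ∀ j, 0 < C j) (hT : ∀ j, 0 < T j) (hCi : 0 < Ci) (hDi : 0 < Di) :
    (∃ t : ℝ, 0 < t ∧ t ≤ Di ∧ Ci + ∑ j, (⌈t / T j⌉ : ℝ) * C j ≤ t) ↔
    (∃ t : ℝ, 0 < t ∧ t ≤ Di ∧ (Ci + ∑ j, (⌈t / T j⌉ : ℝ) * C j ≤ t) ∧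
      (t = Di ∨ ∃ (k : Fin i) (n : ℤ), 0 < n ∧ t = (n : ℝ) * T k)) := by
  constructor
  · rintro ⟨t, ht0, htD, hW⟩
    set s : Finset ℝ := insert Di (Finset.univ.image (fun j => (⌈t / T j⌉ : ℝ) * T j))
      with hs
    have hne : s.Nonempty := ⟨Di, Finset.mem_insert_self _ _⟩
    set t' : ℝ := s.min' hne with ht'
    have hle : ∀ x ∈ s, t ≤ x := by
      intro x hx
      rcases Finset.mem_insert.mp hx with h | h
      · exact h ▸ htD
      · obtain ⟨j, _, rfl⟩ := Finset.mem_image.mp h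
        rw [← div_le_iff₀ (hT j)]
        exact Int.le_ceil _
    have htt' : t ≤ t' := Finset.le_min' _ _ _ hle
    have ht'mem : t' ∈ s := Finset.min'_mem _ _
    have ht'le : ∀ x ∈ s, t' ≤ x := fun x hx => Finset.min'_le _ _ hx
    have ht'D : t' ≤ Di := ht'le Di (Finset.mem_insert_self _ _)
    have hceil : ∀ j, (⌈t' / T j⌉ : ℤ) ≤ ⌈t / T j⌉ := by
      intro j
      apply Int.ceil_le.mpr
      rw [div_le_iff₀ (hT j)]
      exact ht'le _ (Finset.mem_insert_of_mem (Finset.mem_image_of_mem _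
        (Finset.mem_univ j)))
    have hsum : ∑ j, (⌈t' / T j⌉ : ℝ) * C j ≤ ∑ j, (⌈t / T j⌉ : ℝ) * C j := by
      apply Finset.sum_le_sum
      intro j _
      exact mul_le_mul_of_nonneg_right (by exact_mod_cast hceil j) (hC j).le
    refine ⟨t', lt_of_lt_of_le ht0 htt', ht'D, ?_, ?_⟩
    · calc Ci + ∑ j, (⌈t' / T j⌉ : ℝ) * C j
          ≤ Ci + ∑ j, (⌈t / T j⌉ : ℝ) * C j := by linarith
        _ ≤ t := hW
        _ ≤ t' := htt'
    · rcases Finset.mem_insert.mp ht'mem with h | h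
      · exact Or.inl h
      · obtain ⟨k, _, hk⟩ := Finset.mem_image.mp h
        refine Or.inr ⟨k, ⌈t / T k⌉, ?_, hk.symm⟩
        exact Int.ceil_pos.mpr (div_pos ht0 (hT k))
  · rintro ⟨t, ht0, htD, hW, _⟩
    exact ⟨t, ht0, htD, hW⟩
end

section
/- If a vector of positive integers n satisfies C_i + Σ_{j=1}^{i−1} n_j·C_j ≤ n_k·T_k for all k < i and C_i + Σ_{j=1}^{i−1} n_j·C_j ≤ D_i, and t* = C_i + Σ_{j<i} n_j·C_j, then the synchronous demand W_i(t*) = C_i + Σ_{j<i} ⌈t*/T_j⌉·C_j satisfies W_i(t*) ≤ t* ≤ D_i (sufficiency direction of Seto's test). -/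
/-- Sufficiency direction of Seto's test: if a positive integer vector `n`
satisfies the inequalities, then `t* = C_i + Σ_j n_j·C_j` satisfies
`W_i(t*) ≤ t* ≤ D_i`. -/
theorem stmt13 (i : ℕ) (C T : Fin i → ℝ) (Ci Di : ℝ)
    (hC : ∀ j, 0 < C j) (hT : ∀ j, 0 < T j) (hCi : 0 < Ci) (hDi : 0 < Di)
    (n : Fin i → ℤ) (hn : ∀ j, 0 < n j)
    (h1 : ∀ k, Ci + ∑ j, (n j : ℝ) * C j ≤ (n k : ℝ) * T k)
    (h2 : Ci + ∑ j, (n j : ℝ) * C j ≤ Di)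
    (tstar : ℝ) (htstar : tstar = Ci + ∑ j, (n j : ℝ) * C j) :
    Ci + ∑ j, (⌈tstar / T j⌉ : ℝ) * C j ≤ tstar ∧ tstar ≤ Di := by
  constructor
  · conv_rhs => rw [htstar]
    gcongr with j _
    · exact (hC j).le
    · have h : tstar / T j ≤ (n j : ℝ) := by
        rw [div_le_iff₀ (hT j)]
        rw [htstar]; exact h1 j
      exact_mod_cast Int.ceil_le.mpr h
  · rw [htstar]; exact h2
end

section
/- Conversely (necessity direction of Seto's test), if there exists t with 0 < t ≤ D_i and C_i + Σ_{j=1}^{i−1} ⌈t/T_j⌉·C_j ≤ t, then the vector n defined by n_j = ⌈t/T_j⌉ consists of positive integers and satisfies C_i + Σ_{j<i} n_j·C_j ≤ n_k·T_k for all k < i and C_i + Σ_{j<i} n_j·C_j ≤ D_i. -/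
/-- Necessity direction of Seto's test: if `W_i(t) ≤ t` for some
`t ∈ (0, D_i]`, then the vector `n_j = ⌈t/T_j⌉` consists of positive integers
and satisfies the test's inequalities. -/
theorem stmt14 (i : ℕ) (C T : Fin i → ℝ) (Ci Di : ℝ)
    (hC : ∀ j, 0 < C j) (hT : ∀ j, 0 < T j) (hCi : 0 < Ci)
    (t : ℝ) (ht0 : 0 < t) (htD : t ≤ Di)
    (hW : Ci + ∑ j, (⌈t / T j⌉ : ℝ) * C j ≤ t) :
    (∀ j, 0 < ⌈t / T j⌉) ∧
    (∀ k, Ci + ∑ j, (⌈t / T j⌉ : ℝ) * C j ≤ (⌈t / T k⌉ : ℝ) * T k) ∧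
    Ci + ∑ j, (⌈t / T j⌉ : ℝ) * C j ≤ Di := by
  refine ⟨fun j => Int.ceil_pos.mpr (div_pos ht0 (hT j)), fun k => ?_, hW.trans htD⟩
  have h1 : t ≤ (⌈t / T k⌉ : ℝ) * T k := by
    rw [← div_le_iff₀ (hT k)]; exact Int.le_ceil _
  exact hW.trans h1
end
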